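/- Under the same setup, if in addition f is λ_min-strongly convex in the sense that ⟨∇f(θ₁)-∇f(θ₂), θ₁-θ₂⟩ ≥ λ_min|θ₁-θ₂|² for all θ₁, θ₂, then R_{k+1} - R_k ≤ [-2ηλ_min + η²(λ₀² + Λ² - λ_min²)] R_k + 2η²Λ D₀ √(R_k) + η² D₀². -/

import Mathlib

/-!
Expanding the square, `‖θ_{k+1} - θ†‖² = r² - 2η⟪g_γ, θ_k - θ†⟫ + η²‖g_γ‖²` with
`r = ‖θ_k - θ†‖` and `g_j = ∇f_j(θ_k)`. Since `γ_k` is uniform and independent of `θ_k`, this has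
the expectation of its average over `j`: the cross term averages to
`⟪∇f(θ_k), θ_k - θ†⟫ ≥ λ_min r²`, and `‖g_j‖ ≤ λ_j r + ‖∇f_j(θ†)‖` with Cauchy–Schwarz gives
`(1/J)Σ‖g_j‖² ≤ (Λ r + D₀)²`. Strong monotonicity against the Lipschitz bound on `∇f` forces
`λ_min ≤ λ₀`, so `η²(λ₀² - λ_min²) r² ≥ 0` may be added, and `E r ≤ √R_k`.
-/

open MeasureTheory ProbabilityTheory
open scoped ENNReal RealInnerProductSpace

section Deterministic

variable {E : Type*} [NormedAddCommGroup E] [InnerProductSpace ℝ E] {ι : Type*} [Fintype ι]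

lemma sum_mul_sq_le_sq_of_le_mul_add {p a l b : ι → ℝ} {r : ℝ} (hp : ∀ j, 0 ≤ p j)
    (hr : 0 ≤ r) (ha : ∀ j, 0 ≤ a j) (hab : ∀ j, a j ≤ l j * r + b j) :
    ∑ j, p j * a j ^ 2 ≤ (√(∑ j, p j * l j ^ 2) * r + √(∑ j, p j * b j ^ 2)) ^ 2 := by
  have hl : 0 ≤ ∑ j, p j * l j ^ 2 := Finset.sum_nonneg fun j _ => by have := hp j; positivity
  have hb : 0 ≤ ∑ j, p j * b j ^ 2 := Finset.sum_nonneg fun j _ => by have := hp j; positivity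
  have hcs : ∑ j, p j * l j * b j ≤ √(∑ j, p j * l j ^ 2) * √(∑ j, p j * b j ^ 2) := by
    rw [← Real.sqrt_mul hl]
    refine (le_abs_self _).trans (Real.abs_le_sqrt ?_)
    refine Finset.sum_sq_le_sum_mul_sum_of_sq_le_mul _ (fun j _ => by have := hp j; positivity)
      (fun j _ => by have := hp j; positivity) fun j _ => le_of_eq (by ring)
  calc ∑ j, p j * a j ^ 2 ≤ ∑ j, p j * (l j * r + b j) ^ 2 :=
        Finset.sum_le_sum fun j _ =>
          mul_le_mul_of_nonneg_left (pow_le_pow_left₀ (ha j) (hab j) 2) (hp j)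
    _ = (∑ j, p j * l j ^ 2) * r ^ 2 + 2 * r * ∑ j, p j * l j * b j + ∑ j, p j * b j ^ 2 := by
        simp only [Finset.sum_mul, Finset.mul_sum, ← Finset.sum_add_distrib]
        exact Finset.sum_congr rfl fun j _ => by ring
    _ ≤ _ := by
        nlinarith [mul_le_mul_of_nonneg_left hcs hr, Real.sq_sqrt hl, Real.sq_sqrt hb]

lemma sq_mul_norm_sq_le_of_le_inner {m L : ℝ} {g v : E} (hm : 0 ≤ m)
    (hinner : m * ‖v‖ ^ 2 ≤ ⟪g, v⟫) (hg : ‖g‖ ≤ L * ‖v‖) : m ^ 2 * ‖v‖ ^ 2 ≤ L ^ 2 * ‖v‖ ^ 2 := by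
  have hmL : m * ‖v‖ ^ 2 ≤ L * ‖v‖ ^ 2 := by
    nlinarith [real_inner_le_norm g v, mul_le_mul_of_nonneg_right hg (norm_nonneg v)]
  rcases (norm_nonneg v).eq_or_lt with hv | hv
  · simp [← hv]
  · have : m ≤ L := le_of_mul_le_mul_right hmL (by positivity)
    gcongr

lemma sum_mul_norm_sub_smul_sq (p : ι → ℝ) (hp : ∑ j, p j = 1) (v : E) (η : ℝ) (g : ι → E) :
    ∑ j, p j * ‖v - η • g j‖ ^ 2
      = ‖v‖ ^ 2 - 2 * η * ⟪∑ j, p j • g j, v⟫ + η ^ 2 * ∑ j, p j * ‖g j‖ ^ 2 := by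
  calc ∑ j, p j * ‖v - η • g j‖ ^ 2
      = ∑ j, (p j * ‖v‖ ^ 2 - 2 * η * (p j * ⟪g j, v⟫) + η ^ 2 * (p j * ‖g j‖ ^ 2)) :=
        Finset.sum_congr rfl fun j _ => by
          rw [norm_sub_sq_real, inner_smul_right, norm_smul, mul_pow, Real.norm_eq_abs, sq_abs,
            real_inner_comm]
          ring
    _ = _ := by
        rw [Finset.sum_add_distrib, Finset.sum_sub_distrib, ← Finset.sum_mul, ← Finset.mul_sum,
          ← Finset.mul_sum, hp, one_mul, sum_inner]
        simp only [real_inner_smul_left]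

lemma sum_mul_norm_sub_smul_sub_sq_le {F : E → E} {G : ι → E → E} {p l : ι → ℝ}
    {x y : E} {η m L : ℝ} (hp : ∀ j, 0 ≤ p j) (hp₁ : ∑ j, p j = 1)
    (hF : F x = ∑ j, p j • G j x) (hFy : F y = 0) (hη : 0 ≤ η) (hm : 0 ≤ m)
    (hmono : m * ‖x - y‖ ^ 2 ≤ ⟪F x - F y, x - y⟫) (hLip : ‖F x - F y‖ ≤ L * ‖x - y‖)
    (hLipG : ∀ j, ‖G j x - G j y‖ ≤ l j * ‖x - y‖) :
    ∑ j, p j * ‖x - η • G j x - y‖ ^ 2 ≤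
      (1 + (-2 * η * m + η ^ 2 * (L ^ 2 + (√(∑ j, p j * l j ^ 2)) ^ 2 - m ^ 2))) * ‖x - y‖ ^ 2
        + 2 * η ^ 2 * √(∑ j, p j * l j ^ 2) * √(∑ j, p j * ‖G j y‖ ^ 2) * ‖x - y‖
        + η ^ 2 * (√(∑ j, p j * ‖G j y‖ ^ 2)) ^ 2 := by
  rw [hFy, sub_zero] at hmono hLip
  have hgrad := sum_mul_sq_le_sq_of_le_mul_add (l := l) (b := fun j => ‖G j y‖) hp
    (norm_nonneg (x - y)) (fun j => norm_nonneg (G j x)) fun j =>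
      (norm_le_norm_add_norm_sub' (G j x) (G j y)).trans (by linarith [hLipG j])
  have hsq := sq_mul_norm_sq_le_of_le_inner hm hmono hLip
  have hstep : ∀ j, x - η • G j x - y = (x - y) - η • G j x := fun j => sub_right_comm _ _ _
  simp only [hstep, sum_mul_norm_sub_smul_sq p hp₁, ← hF]
  nlinarith [mul_le_mul_of_nonneg_left hmono hη, mul_le_mul_of_nonneg_left hgrad (sq_nonneg η),
    mul_le_mul_of_nonneg_left hsq (sq_nonneg η)]

end Deterministic

section Probability

variable {Ω : Type*} [MeasurableSpace Ω] {μ : Measure Ω}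

lemma integral_le_sqrt_integral_sq [IsProbabilityMeasure μ] {r : Ω → ℝ} (hr : MemLp r 2 μ) :
    ∫ ω, r ω ∂μ ≤ √(∫ ω, r ω ^ 2 ∂μ) := by
  have hvar := variance_nonneg r μ
  rw [variance_eq_sub hr] at hvar
  exact (le_abs_self _).trans (Real.abs_le_sqrt (by simpa using hvar))

lemma integral_le_of_le_quadratic [IsProbabilityMeasure μ] {f r : Ω → ℝ} {a b c : ℝ}
    (hf : Integrable f μ) (hr : MemLp r 2 μ) (hb : 0 ≤ b)
    (hfr : ∀ ω, f ω ≤ a * r ω ^ 2 + b * r ω + c) :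
    ∫ ω, f ω ∂μ ≤ a * ∫ ω, r ω ^ 2 ∂μ + b * √(∫ ω, r ω ^ 2 ∂μ) + c := by
  have hr₁ : Integrable r μ := hr.integrable one_le_two
  have hr₂ : Integrable (fun ω => r ω ^ 2) μ := hr.integrable_sq
  have hab : Integrable (fun ω => a * r ω ^ 2 + b * r ω) μ :=
    (hr₂.const_mul a).add (hr₁.const_mul b)
  calc ∫ ω, f ω ∂μ ≤ ∫ ω, (a * r ω ^ 2 + b * r ω + c) ∂μ :=
        integral_mono hf (hab.add (integrable_const c)) hfr
    _ = a * ∫ ω, r ω ^ 2 ∂μ + b * ∫ ω, r ω ∂μ + c := by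
        rw [integral_add hab (integrable_const c), integral_add (hr₂.const_mul a)
          (hr₁.const_mul b), integral_const_mul, integral_const_mul, integral_const,
          probReal_univ, one_smul]
    _ ≤ _ := by gcongr; exact integral_le_sqrt_integral_sq hr

lemma MeasureTheory.MemLp.comp_of_norm_sub_le {E F : Type*} [NormedAddCommGroup E]
    [NormedAddCommGroup F] [IsFiniteMeasure μ] {p : ℝ≥0∞} {X : Ω → E} {g : E → F} {y : E}
    {K : ℝ} (hgc : Continuous g) (hg : ∀ x, ‖g x - g y‖ ≤ K * ‖x - y‖) (hX : MemLp (fun ω => X ω - y) p μ) :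
    MemLp (fun ω => g (X ω)) p μ := by
  have hXm : AEStronglyMeasurable X μ := by simpa using hX.1.add_const y
  have := (hX.of_le_mul ((hgc.comp_aestronglyMeasurable hXm).sub aestronglyMeasurable_const)
    (ae_of_all _ fun ω => hg (X ω))).add (memLp_const (g y))
  simpa using this

lemma integrable_norm_sub_smul_sub_sq {E : Type*} [NormedAddCommGroup E] [NormedSpace ℝ E]
    [IsFiniteMeasure μ] {X : Ω → E} {G : E → E} {y : E} {η l : ℝ} (hGc : Continuous G)
    (hG : ∀ x, ‖G x - G y‖ ≤ l * ‖x - y‖) (hη : 0 ≤ η) (hX : MemLp (fun ω => X ω - y) 2 μ) :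
    Integrable (fun ω => ‖X ω - η • G (X ω) - y‖ ^ 2) μ := by
  have hstep : MemLp (fun ω => X ω - η • G (X ω) - y) 2 μ := by
    refine hX.comp_of_norm_sub_le (g := fun x => x - η • G x - y) (K := 1 + η * l) (by fun_prop)
      fun x => ?_
    calc ‖x - η • G x - y - (y - η • G y - y)‖ = ‖(x - y) - η • (G x - G y)‖ := by
          rw [smul_sub]; congr 1; abel
      _ ≤ ‖x - y‖ + η * ‖G x - G y‖ :=
          (norm_sub_le _ _).trans_eq (by rw [norm_smul, Real.norm_of_nonneg hη])
      _ ≤ (1 + η * l) * ‖x - y‖ := by nlinarith [hG x]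
  exact (memLp_two_iff_integrable_sq_norm hstep.1).1 hstep

lemma integral_comp_eq_sum_of_indepFun {ι E : Type*} [Fintype ι] [MeasurableSpace ι]
    [MeasurableSingletonClass ι] [MeasurableSpace E] {γ : Ω → ι} {X : Ω → E}
    (hγ : Measurable γ) (hX : Measurable X) (hind : γ ⟂ᵢ[μ] X) {Φ : ι → E → ℝ}
    (hΦ : ∀ j, Measurable (Φ j)) (hint : ∀ j, Integrable (fun ω => Φ j (X ω)) μ) :
    ∫ ω, Φ (γ ω) (X ω) ∂μ = ∑ j, μ.real (γ ⁻¹' {j}) * ∫ ω, Φ j (X ω) ∂μ := by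
  have hset : ∀ j, MeasurableSet (γ ⁻¹' {j}) := fun j => hγ (measurableSet_singleton j)
  have hsplit : ∀ ω, Φ (γ ω) (X ω) = ∑ j, (γ ⁻¹' {j}).indicator (fun ω => Φ j (X ω)) ω :=
    fun ω => by
      rw [Finset.sum_eq_single (γ ω) (fun j _ hj => Set.indicator_of_notMem (hj ·.symm) _)
        (by simp)]
      exact (Set.indicator_of_mem (Set.mem_preimage.2 (Set.mem_singleton _))
        (fun ω => Φ (γ ω) (X ω))).symm
  simp_rw [hsplit]
  rw [integral_finsetSum _ fun j _ => (hint j).indicator (hset j)]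
  refine Finset.sum_congr rfl fun j _ => ?_
  have hφ : Measurable (({j} : Set ι).indicator (1 : ι → ℝ)) :=
    measurable_one.indicator (measurableSet_singleton j)
  have hind_mul := (hind.comp hφ (hΦ j)).integral_fun_mul_eq_mul_integral
    (hφ.comp hγ).aestronglyMeasurable ((hΦ j).comp hX).aestronglyMeasurable
  have hind_eq : (γ ⁻¹' {j}).indicator (fun ω => Φ j (X ω))
      = fun ω => (({j} : Set ι).indicator 1 ∘ γ) ω * (Φ j ∘ X) ω := by
    ext ω
    by_cases h : γ ω = j <;> simp [h]
  rw [hind_eq, hind_mul, ← integral_indicator_one (hset j)]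
  rfl

end Probability

theorem stmt_6_general
    (d J : ℕ) (hJ : 0 < J)
    (f : EuclideanSpace ℝ (Fin d) → ℝ) (fj : Fin J → EuclideanSpace ℝ (Fin d) → ℝ)
    (hsum : ∀ x, gradient f x = (J : ℝ)⁻¹ • ∑ j, gradient (fj j) x)
    (lam₀ : ℝ) (lamj : Fin J → ℝ)
    (hLip : ∀ x y, ‖gradient f x - gradient f y‖ ≤ lam₀ * ‖x - y‖)
    (hLipj : ∀ j x y, ‖gradient (fj j) x - gradient (fj j) y‖ ≤ lamj j * ‖x - y‖)
    (θdag : EuclideanSpace ℝ (Fin d)) (hθdag : gradient f θdag = 0)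
    (D₀ Λ : ℝ)
    (hD₀ : D₀ = Real.sqrt ((J : ℝ)⁻¹ * ∑ j, ‖gradient (fj j) θdag‖ ^ 2))
    (hΛ : Λ = Real.sqrt ((J : ℝ)⁻¹ * ∑ j, (lamj j) ^ 2))
    (η : ℝ) (hη : 0 < η)
    (Ω : Type*) [MeasurableSpace Ω] (μ : Measure Ω) [IsProbabilityMeasure μ]
    (γ : ℕ → Ω → Fin J) (θ : ℕ → Ω → EuclideanSpace ℝ (Fin d))
    (hγmeas : ∀ k, Measurable (γ k)) (hθmeas : ∀ k, Measurable (θ k))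
    (hunif : ∀ k j, μ {ω | γ k ω = j} = (J : ℝ≥0∞)⁻¹)
    (hindep : ∀ k, ProbabilityTheory.IndepFun (γ k) (θ k) μ)
    (hSGD : ∀ k ω, θ (k + 1) ω = θ k ω - η • gradient (fj (γ k ω)) (θ k ω))
    (R : ℕ → ℝ) (hR : ∀ k, R k = ∫ ω, ‖θ k ω - θdag‖ ^ 2 ∂μ)
    (hint : ∀ k, Integrable (fun ω => ‖θ k ω - θdag‖ ^ 2) μ)
    (lammin : ℝ) (hlammin : 0 < lammin)
    (hconv : ∀ θ₁ θ₂ : EuclideanSpace ℝ (Fin d),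
      (inner ℝ (gradient f θ₁ - gradient f θ₂) (θ₁ - θ₂) : ℝ) ≥ lammin * ‖θ₁ - θ₂‖ ^ 2) :
    ∀ k, R (k + 1) - R k ≤
      (-2 * η * lammin + η ^ 2 * (lam₀ ^ 2 + Λ ^ 2 - lammin ^ 2)) * R k
      + 2 * η ^ 2 * Λ * D₀ * Real.sqrt (R k) + η ^ 2 * D₀ ^ 2 := by
  intro k
  have hp₁ : ∑ _j : Fin J, (J : ℝ)⁻¹ = 1 := by simp [hJ.ne']
  have hcont : ∀ j, Continuous (gradient (fj j)) := fun j =>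
    (LipschitzWith.of_dist_le' fun x y => by simpa only [dist_eq_norm] using hLipj j x y).continuous
  have hθ : MemLp (fun ω => θ k ω - θdag) 2 μ :=
    (memLp_two_iff_integrable_sq_norm ((hθmeas k).sub_const θdag).aestronglyMeasurable).2 (hint k)
  have hstep_int : ∀ j, Integrable (fun ω => ‖θ k ω - η • gradient (fj j) (θ k ω) - θdag‖ ^ 2) μ :=
    fun j => integrable_norm_sub_smul_sub_sq (hcont j) (fun x => hLipj j x θdag) hη.le hθ
  have hprob : ∀ j, μ.real (γ k ⁻¹' {j}) = (J : ℝ)⁻¹ := fun j => by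
    rw [measureReal_def, show γ k ⁻¹' {j} = {ω | γ k ω = j} from rfl, hunif, ENNReal.toReal_inv,
      ENNReal.toReal_natCast]
  have hRsucc : R (k + 1) =
      ∫ ω, ∑ j, (J : ℝ)⁻¹ * ‖θ k ω - η • gradient (fj j) (θ k ω) - θdag‖ ^ 2 ∂μ := by
    rw [hR, integral_finsetSum _ fun j _ => (hstep_int j).const_mul _]
    simp only [hSGD, integral_const_mul]
    refine (integral_comp_eq_sum_of_indepFun
      (Φ := fun j x => ‖x - η • gradient (fj j) x - θdag‖ ^ 2) (hγmeas k) (hθmeas k) (hindep k)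
      (fun j => by have := hcont j; fun_prop) hstep_int).trans ?_
    simp only [hprob]
  have hpt : ∀ ω, ∑ j, (J : ℝ)⁻¹ * ‖θ k ω - η • gradient (fj j) (θ k ω) - θdag‖ ^ 2 ≤
      (1 + (-2 * η * lammin + η ^ 2 * (lam₀ ^ 2 + Λ ^ 2 - lammin ^ 2))) * ‖θ k ω - θdag‖ ^ 2
        + 2 * η ^ 2 * Λ * D₀ * ‖θ k ω - θdag‖ + η ^ 2 * D₀ ^ 2 := fun ω => by
    rw [hΛ, hD₀, Finset.mul_sum, Finset.mul_sum]
    exact sum_mul_norm_sub_smul_sub_sq_le (fun _ => by positivity) hp₁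
      (by rw [hsum, Finset.smul_sum]) hθdag hη.le hlammin.le (hconv _ _) (hLip _ _)
      (fun j => hLipj j _ θdag)
  have hbound := integral_le_of_le_quadratic
    (integrable_finsetSum _ fun j _ => (hstep_int j).const_mul _) hθ.norm
    (by rw [hΛ, hD₀]; positivity) hpt
  rw [← hRsucc, ← hR] at hbound
  linarith

theorem stmt_6
    (d J : ℕ) (hJ : 0 < J)
    (f : EuclideanSpace ℝ (Fin d) → ℝ) (fj : Fin J → EuclideanSpace ℝ (Fin d) → ℝ)
    (hdiff : ∀ x, DifferentiableAt ℝ f x)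
    (hdiffj : ∀ j x, DifferentiableAt ℝ (fj j) x)
    (hsum : ∀ x, gradient f x = (J : ℝ)⁻¹ • ∑ j, gradient (fj j) x)
    (lam₀ : ℝ) (lamj : Fin J → ℝ) (hlam₀ : 0 < lam₀)
    (hLip : ∀ x y, ‖gradient f x - gradient f y‖ ≤ lam₀ * ‖x - y‖)
    (hLipj : ∀ j x y, ‖gradient (fj j) x - gradient (fj j) y‖ ≤ lamj j * ‖x - y‖)
    (θdag : EuclideanSpace ℝ (Fin d)) (hθdag : gradient f θdag = 0)
    (D₀ Λ : ℝ)
    (hD₀ : D₀ = Real.sqrt ((J : ℝ)⁻¹ * ∑ j, ‖gradient (fj j) θdag‖ ^ 2))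
    (hΛ : Λ = Real.sqrt ((J : ℝ)⁻¹ * ∑ j, (lamj j) ^ 2))
    (η : ℝ) (hη : 0 < η) (hηlam : η < 1 / lam₀)
    (Ω : Type*) [MeasurableSpace Ω] (μ : Measure Ω) [IsProbabilityMeasure μ]
    (γ : ℕ → Ω → Fin J) (θ : ℕ → Ω → EuclideanSpace ℝ (Fin d))
    (hγmeas : ∀ k, Measurable (γ k)) (hθmeas : ∀ k, Measurable (θ k))
    (hunif : ∀ k j, μ {ω | γ k ω = j} = (J : ℝ≥0∞)⁻¹)
    (hindep : ∀ k, ProbabilityTheory.IndepFun (γ k) (θ k) μ)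
    (hSGD : ∀ k ω, θ (k + 1) ω = θ k ω - η • gradient (fj (γ k ω)) (θ k ω))
    (R : ℕ → ℝ) (hR : ∀ k, R k = ∫ ω, ‖θ k ω - θdag‖ ^ 2 ∂μ)
    (hint : ∀ k, Integrable (fun ω => ‖θ k ω - θdag‖ ^ 2) μ)
    (lammin : ℝ) (hlammin : 0 < lammin)
    (hconv : ∀ θ₁ θ₂ : EuclideanSpace ℝ (Fin d),
      (inner ℝ (gradient f θ₁ - gradient f θ₂) (θ₁ - θ₂) : ℝ) ≥ lammin * ‖θ₁ - θ₂‖ ^ 2) :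
    ∀ k, R (k + 1) - R k ≤
      (-2 * η * lammin + η ^ 2 * (lam₀ ^ 2 + Λ ^ 2 - lammin ^ 2)) * R k
      + 2 * η ^ 2 * Λ * D₀ * Real.sqrt (R k) + η ^ 2 * D₀ ^ 2 :=
  stmt_6_general d J hJ f fj hsum lam₀ lamj hLip hLipj θdag hθdag D₀ Λ hD₀ hΛ η hη Ω μ γ θ hγmeas
    hθmeas hunif hindep hSGD R hR hint lammin hlammin hconv
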